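/- arXiv:2505.04514 — 2 statements merged into one kernel-verified Lean document; each statement's English description precedes it below -/
import Mathlib

section
/- Duhamel's formula for the parameterized matrix exponential: for every T > 0, every μ ∈ ℝ^c, and every i ∈ [c], the μ_i-partial derivative of the matrix exp(−(H − μ·Q)/T) exists and equals (1/T) ∫_0^1 exp(−(H − μ·Q)(1−s)/T) · Q_i · exp(−(H − μ·Q)s/T) ds. -/
/-!
Differentiating `s ↦ exp ((1 - s) • M) * exp (s • N)` and integrating over `[0, 1]` gives
`exp N - exp M = ∫₀¹ exp ((1 - s) • M) * (N - M) * exp (s • N) ds`. For `N = M + (t - t₀) • B`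
this writes the difference quotient of `t ↦ exp (M + (t - t₀) • B)` at `t₀` as an integral that
depends continuously on `t`, and its value at `t = t₀` is the Duhamel integral.
-/

open Matrix MeasureTheory
open scoped ComplexOrder

noncomputable section

/-- A density matrix: a positive semi-definite complex matrix with unit trace. -/
def IsDensityMatrix {n : Type*} [Fintype n] (ρ : Matrix n n ℂ) : Prop :=
  ρ.PosSemidef ∧ ρ.trace = 1

/-- von Neumann entropy `S(ρ) = -Tr[ρ ln ρ]` via eigenvalues,
with the convention `0 ln 0 = 0` (since `Real.log 0 = 0`). -/
noncomputable def vnEntropy {n : Type*} [Fintype n] [DecidableEq n]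
    (ρ : Matrix n n ℂ) : ℝ :=
  if h : ρ.IsHermitian then -∑ i, h.eigenvalues i * Real.log (h.eigenvalues i) else 0

/-- Matrix logarithm via the functional calculus (junk value `0` off Hermitian matrices),
with the convention `log 0 = 0` on eigenvalues. -/
noncomputable def matLog {n : Type*} [Fintype n] [DecidableEq n]
    (A : Matrix n n ℂ) : Matrix n n ℂ :=
  if h : A.IsHermitian then
    (h.eigenvectorUnitary : Matrix n n ℂ) *
      Matrix.diagonal (fun i => (Real.log (h.eigenvalues i) : ℂ)) *
      star (h.eigenvectorUnitary : Matrix n n ℂ)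
  else 0

/-- Real matrix power via the functional calculus (junk value `0` off Hermitian matrices). -/
noncomputable def matRpow {n : Type*} [Fintype n] [DecidableEq n]
    (A : Matrix n n ℂ) (s : ℝ) : Matrix n n ℂ :=
  if h : A.IsHermitian then
    (h.eigenvectorUnitary : Matrix n n ℂ) *
      Matrix.diagonal (fun i => ((h.eigenvalues i ^ s : ℝ) : ℂ)) *
      star (h.eigenvectorUnitary : Matrix n n ℂ)
  else 0

/-- Operator (spectral) norm of a complex square matrix. -/
noncomputable def opNorm {n : Type*} [Fintype n] [DecidableEq n] (A : Matrix n n ℂ) : ℝ :=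
  ‖Matrix.toEuclideanCLM (𝕜 := ℂ) A‖

/-- `μ · Q := ∑ i, μ i • Q i`. -/
def muDotQ {d c : ℕ} (Q : Fin c → Matrix (Fin d) (Fin d) ℂ) (μ : Fin c → ℝ) :
    Matrix (Fin d) (Fin d) ℂ :=
  ∑ i, (μ i : ℂ) • Q i

/-- Partition function `Z_T(μ) = Tr[exp(-(H - μ·Q)/T)]`. -/
noncomputable def partitionZ {d c : ℕ} (H : Matrix (Fin d) (Fin d) ℂ)
    (Q : Fin c → Matrix (Fin d) (Fin d) ℂ) (T : ℝ) (μ : Fin c → ℝ) : ℝ :=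
  (Matrix.trace (NormedSpace.exp ((-(T⁻¹) : ℂ) • (H - muDotQ Q μ)))).re

/-- Thermal state `ρ_T(μ) = exp(-(H - μ·Q)/T) / Z_T(μ)`. -/
noncomputable def thermalState {d c : ℕ} (H : Matrix (Fin d) (Fin d) ℂ)
    (Q : Fin c → Matrix (Fin d) (Fin d) ℂ) (T : ℝ) (μ : Fin c → ℝ) :
    Matrix (Fin d) (Fin d) ℂ :=
  ((partitionZ H Q T μ : ℂ))⁻¹ • NormedSpace.exp ((-(T⁻¹) : ℂ) • (H - muDotQ Q μ))

/-- Umegaki relative entropy `D(ω‖τ) = Tr[ω (ln ω − ln τ)]`. -/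
noncomputable def relEntropy {n : Type*} [Fintype n] [DecidableEq n]
    (ω τ : Matrix n n ℂ) : ℝ :=
  (Matrix.trace (ω * (matLog ω - matLog τ))).re

end

attribute [local instance] Matrix.frobeniusNormedAddCommGroup Matrix.frobeniusNormedSpace
attribute [local instance] Matrix.frobeniusNormedRing Matrix.frobeniusNormedAlgebra

open NormedSpace

theorem hasDerivAt_of_sub_eq_smul {𝕜 E : Type*} [NontriviallyNormedField 𝕜]
    [NormedAddCommGroup E] [NormedSpace 𝕜 E] {f Ψ : 𝕜 → E} {x : 𝕜}
    (h : ∀ t, f t - f x = (t - x) • Ψ t) (hΨ : ContinuousAt Ψ x) :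
    HasDerivAt f (Ψ x) x := by
  rw [hasDerivAt_iff_tendsto_slope]
  refine hΨ.tendsto.mono_left nhdsWithin_le_nhds |>.congr' ?_
  filter_upwards [self_mem_nhdsWithin] with t ht
  rw [slope_def_module, h, smul_smul, inv_mul_cancel₀ (sub_ne_zero.2 ht), one_smul]

section Duhamel

variable {𝔸 : Type*} [NormedRing 𝔸] [NormedAlgebra ℝ 𝔸] [CompleteSpace 𝔸]

@[fun_prop]
theorem exp_continuous_of_normedAlgebra_real : Continuous (exp : 𝔸 → 𝔸) :=
  continuous_iff_continuousAt.2 fun x => (exp_analytic (𝕂 := ℝ) x).continuousAt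

theorem hasDerivAt_exp_one_sub_smul_mul_exp_smul (M N : 𝔸) (s : ℝ) :
    HasDerivAt (fun s : ℝ => exp ((1 - s) • M) * exp (s • N))
      (exp ((1 - s) • M) * (N - M) * exp (s • N)) s := by
  have hM := (hasDerivAt_exp_smul_const M (1 - s)).scomp s ((hasDerivAt_id s).const_sub 1)
  convert hM.mul (hasDerivAt_exp_smul_const' N s) using 1
  · rfl
  · simp only [Function.comp_apply, neg_one_smul, mul_sub, sub_mul, neg_mul, mul_assoc]
    abel

theorem exp_sub_exp_eq_integral (M N : 𝔸) :
    exp N - exp M = ∫ s in (0 : ℝ)..1, exp ((1 - s) • M) * (N - M) * exp (s • N) := by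
  rw [intervalIntegral.integral_eq_sub_of_hasDerivAt
    (fun s _ => hasDerivAt_exp_one_sub_smul_mul_exp_smul M N s)
    (Continuous.intervalIntegrable (by fun_prop) 0 1)]
  simp

theorem hasDerivAt_exp_add_sub_smul (M B : 𝔸) (t₀ : ℝ) :
    HasDerivAt (fun t : ℝ => exp (M + (t - t₀) • B))
      (∫ s in (0 : ℝ)..1, exp ((1 - s) • M) * B * exp (s • M)) t₀ := by
  set Ψ : ℝ → 𝔸 := fun t =>
    ∫ s in (0 : ℝ)..1, exp ((1 - s) • M) * B * exp (s • (M + (t - t₀) • B))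
  have hΨ : Continuous Ψ :=
    intervalIntegral.continuous_parametric_intervalIntegral_of_continuous' (by fun_prop) 0 1
  have key : ∀ t, exp (M + (t - t₀) • B) - exp (M + (t₀ - t₀) • B) = (t - t₀) • Ψ t := by
    intro t
    rw [sub_self, zero_smul, add_zero, exp_sub_exp_eq_integral, ← intervalIntegral.integral_smul]
    simp only [add_sub_cancel_left, mul_smul_comm, smul_mul_assoc]
  simpa [Ψ] using hasDerivAt_of_sub_eq_smul key hΨ.continuousAt

end Duhamel

theorem muDotQ_update {d c : ℕ} (Q : Fin c → Matrix (Fin d) (Fin d) ℂ) (μ : Fin c → ℝ)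
    (i : Fin c) (t : ℝ) :
    muDotQ Q (Function.update μ i t) = muDotQ Q μ + ((t - μ i : ℝ) : ℂ) • Q i := by
  rw [muDotQ, muDotQ, ← Finset.sum_erase_add _ _ (Finset.mem_univ i),
    ← Finset.sum_erase_add _ _ (Finset.mem_univ i)]
  rw [Finset.sum_congr rfl fun j hj => by rw [Function.update_of_ne (Finset.ne_of_mem_erase hj)]]
  simp only [Function.update_self, Complex.ofReal_sub, sub_smul]
  abel

theorem stmt_7_general (d c : ℕ)
    (H : Matrix (Fin d) (Fin d) ℂ)
    (Q : Fin c → Matrix (Fin d) (Fin d) ℂ)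
    (T : ℝ) (μ : Fin c → ℝ) (i : Fin c) :
    HasDerivAt
      (fun t : ℝ =>
        NormedSpace.exp ((-(T⁻¹) : ℂ) • (H - muDotQ Q (Function.update μ i t))))
      ((T⁻¹ : ℂ) • ∫ s in (0:ℝ)..1,
        NormedSpace.exp ((-((1 - s) * T⁻¹) : ℂ) • (H - muDotQ Q μ)) * Q i *
          NormedSpace.exp ((-(s * T⁻¹) : ℂ) • (H - muDotQ Q μ)))
      (μ i) := by
  set X := H - muDotQ Q μ
  have hexponent : ∀ t : ℝ, (-(T⁻¹) : ℂ) • (H - muDotQ Q (Function.update μ i t)) =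
      (-(T⁻¹) : ℂ) • X + (t - μ i) • (T⁻¹ • Q i) := by
    intro t
    rw [muDotQ_update, ← Complex.coe_smul, ← Complex.coe_smul, smul_smul]
    push_cast
    module
  have hintegrand : ∀ s : ℝ,
      exp ((1 - s) • ((-(T⁻¹) : ℂ) • X)) * (T⁻¹ • Q i) * exp (s • ((-(T⁻¹) : ℂ) • X)) =
        (T⁻¹ : ℂ) • (exp ((-((1 - s) * T⁻¹) : ℂ) • X) * Q i * exp ((-(s * T⁻¹) : ℂ) • X)) := by
    intro s
    simp only [← Complex.coe_smul, smul_smul, smul_mul_assoc, mul_smul_comm]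
    push_cast
    ring_nf
  simp only [hexponent]
  refine (hasDerivAt_exp_add_sub_smul ((-(T⁻¹) : ℂ) • X) (T⁻¹ • Q i) (μ i)).congr_deriv ?_
  rw [← intervalIntegral.integral_smul]
  exact intervalIntegral.integral_congr fun s _ => hintegrand s

/-- Duhamel's formula for the `μ_i`-partial derivative of the
parameterized matrix exponential `exp(−(H − μ·Q)/T)`. -/
theorem stmt_7 (d c : ℕ) (hd : 1 ≤ d)
    (H : Matrix (Fin d) (Fin d) ℂ) (hH : H.IsHermitian)
    (Q : Fin c → Matrix (Fin d) (Fin d) ℂ) (hQ : ∀ i, (Q i).IsHermitian)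
    (T : ℝ) (hT : 0 < T) (μ : Fin c → ℝ) (i : Fin c) :
    HasDerivAt
      (fun t : ℝ =>
        NormedSpace.exp ((-(T⁻¹) : ℂ) • (H - muDotQ Q (Function.update μ i t))))
      ((T⁻¹ : ℂ) • ∫ s in (0:ℝ)..1,
        NormedSpace.exp ((-((1 - s) * T⁻¹) : ℂ) • (H - muDotQ Q μ)) * Q i *
          NormedSpace.exp ((-(s * T⁻¹) : ℂ) • (H - muDotQ Q μ)))
      (μ i) :=
  stmt_7_general d c H Q T μ i
end

section
/- Let f(μ) := μ·q − T ln Z_T(μ) for T > 0 and q ∈ ℝ^c. Then f is a concave function of μ on ℝ^c. -/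
open Matrix MeasureTheory
open scoped ComplexOrder

/-!
`μ ↦ log Z_T(μ)` is `log Tr e^K` composed with the affine map `μ ↦ K(μ) = -(H - μ·Q)/T`, so it
suffices that `K ↦ log Tr e^K` is convex on Hermitian matrices. Let `K = a A + b B` and diagonalise
`K` by a unitary `U`; its eigenvalues are then `a x_j + b y_j`, where `x`, `y` are the diagonal
entries of `A`, `B` in the basis `U`. Hence `log Tr e^K = log ∑_j e^{a x_j + b y_j}`, which by
convexity of the classical log-sum-exp is at most `a log ∑_j e^{x_j} + b log ∑_j e^{y_j}`, and
Peierls' inequality `∑_j e^{x_j} ≤ Tr e^A` bounds this by `a log Tr e^A + b log Tr e^B`.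
-/

open Real Finset

theorem convexOn_log_sum_exp {ι : Type*} [Fintype ι] [Nonempty ι] :
    ConvexOn ℝ Set.univ (fun x : ι → ℝ => log (∑ i, exp (x i))) := by
  refine ⟨convex_univ, fun x _ y _ a b ha hb hab => ?_⟩
  set Sx := ∑ i, exp (x i)
  set Sy := ∑ i, exp (y i)
  have hSx : 0 < Sx := sum_pos (fun i _ => exp_pos _) univ_nonempty
  have hSy : 0 < Sy := sum_pos (fun i _ => exp_pos _) univ_nonempty
  -- normalise `x`, `y` to probability vectors; then convexity of `exp` applies termwise
  have hnormalized : ∑ i, exp (a * (x i - log Sx) + b * (y i - log Sy)) ≤ 1 := calc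
    _ ≤ ∑ i, (a * exp (x i - log Sx) + b * exp (y i - log Sy)) :=
        sum_le_sum fun i _ => convexOn_exp.2 (Set.mem_univ _) (Set.mem_univ _) ha hb hab
    _ = a * (Sx / Sx) + b * (Sy / Sy) := by
        simp only [exp_sub, exp_log hSx, exp_log hSy, sum_add_distrib, ← mul_sum, sum_div, Sx, Sy]
    _ = 1 := by rw [div_self hSx.ne', div_self hSy.ne', mul_one, mul_one, hab]
  rw [smul_eq_mul, smul_eq_mul, log_le_iff_le_exp (sum_pos (fun i _ => exp_pos _) univ_nonempty)]
  calc ∑ i, exp ((a • x + b • y) i)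
      = (∑ i, exp (a * (x i - log Sx) + b * (y i - log Sy))) * exp (a * log Sx + b * log Sy) := by
        rw [sum_mul]
        refine sum_congr rfl fun i _ => ?_
        rw [← exp_add, Pi.add_apply, Pi.smul_apply, Pi.smul_apply, smul_eq_mul, smul_eq_mul]
        ring_nf
    _ ≤ exp (a * log Sx + b * log Sy) := mul_le_of_le_one_left (exp_pos _).le hnormalized

theorem Matrix.convex_setOf_isHermitian {n : Type*} :
    Convex ℝ {A : Matrix n n ℂ | A.IsHermitian} :=
  (selfAdjoint.submodule ℝ (Matrix n n ℂ)).convex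

namespace Matrix

variable {n : Type*} [Fintype n] [DecidableEq n]

theorem sum_normSq_row_of_mem_unitaryGroup {W : Matrix n n ℂ} (hW : W ∈ unitaryGroup n ℂ)
    (j : n) : ∑ k, Complex.normSq (W j k) = 1 := by
  have hjj := congrArg (fun M : Matrix n n ℂ => (M j j).re) (mem_unitaryGroup_iff.mp hW)
  simpa [mul_apply, Complex.mul_conj, Complex.re_sum] using hjj

theorem sum_normSq_col_of_mem_unitaryGroup {W : Matrix n n ℂ} (hW : W ∈ unitaryGroup n ℂ)
    (k : n) : ∑ j, Complex.normSq (W j k) = 1 := by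
  simpa using sum_normSq_row_of_mem_unitaryGroup (Unitary.star_mem hW) k

theorem re_mul_diagonal_mul_star_apply_self (W : Matrix n n ℂ) (κ : n → ℝ) (j : n) :
    ((W * diagonal (fun k => (κ k : ℂ)) * star W) j j).re
      = ∑ k, Complex.normSq (W j k) * κ k := by
  rw [mul_apply, Complex.re_sum]
  refine sum_congr rfl fun k _ => ?_
  rw [mul_diagonal, star_apply, mul_right_comm, RCLike.star_def, Complex.mul_conj,
    ← Complex.ofReal_mul, Complex.ofReal_re]

theorem IsHermitian.exp_eq {A : Matrix n n ℂ} (hA : A.IsHermitian) :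
    NormedSpace.exp A = Unitary.conjStarAlgAut ℂ _ hA.eigenvectorUnitary
      (diagonal (fun k => (Real.exp (hA.eigenvalues k) : ℂ))) := by
  have hconj : NormedSpace.exp A = Unitary.conjStarAlgAut ℂ _ hA.eigenvectorUnitary
      (NormedSpace.exp (diagonal (RCLike.ofReal ∘ hA.eigenvalues))) := by
    conv_lhs => rw [hA.spectral_theorem]
    exact exp_units_conj (Unitary.toUnits hA.eigenvectorUnitary) _
  rw [hconj, exp_diagonal]
  congr 2
  ext k
  simp [← Complex.exp_eq_exp_ℂ]

theorem IsHermitian.re_trace_exp {A : Matrix n n ℂ} (hA : A.IsHermitian) :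
    (NormedSpace.exp A).trace.re = ∑ k, Real.exp (hA.eigenvalues k) := by
  rw [hA.exp_eq, Unitary.conjStarAlgAut_apply, trace_mul_cycle, Unitary.coe_star_mul_self,
    one_mul, trace_diagonal, Complex.re_sum]
  simp only [Complex.ofReal_re]

theorem IsHermitian.star_eigenvectorUnitary_mul_mul {A : Matrix n n ℂ} (hA : A.IsHermitian) :
    star (hA.eigenvectorUnitary : Matrix n n ℂ) * A * hA.eigenvectorUnitary
      = diagonal (fun k => (hA.eigenvalues k : ℂ)) := by
  simpa [Function.comp_def] using hA.conjStarAlgAut_star_eigenvectorUnitary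

theorem IsHermitian.sum_exp_re_diag_le_re_trace_exp {A : Matrix n n ℂ} (hA : A.IsHermitian)
    {U : Matrix n n ℂ} (hU : U ∈ unitaryGroup n ℂ) :
    ∑ j, Real.exp ((star U * A * U) j j).re ≤ (NormedSpace.exp A).trace.re := by
  set W := star U * (hA.eigenvectorUnitary : Matrix n n ℂ)
  have hW : W ∈ unitaryGroup n ℂ := mul_mem (Unitary.star_mem hU) hA.eigenvectorUnitary.2
  have hconj : star U * A * U = W * diagonal (fun k => (hA.eigenvalues k : ℂ)) * star W := by
    conv_lhs => rw [hA.spectral_theorem]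
    simp [W, Function.comp_def, mul_assoc]
  -- `(|W j k|²)` is doubly stochastic: Jensen for `exp` along rows, then sum over columns
  calc ∑ j, Real.exp ((star U * A * U) j j).re
      = ∑ j, Real.exp (∑ k, Complex.normSq (W j k) * hA.eigenvalues k) := by
        simp only [hconj, re_mul_diagonal_mul_star_apply_self]
    _ ≤ ∑ j, ∑ k, Complex.normSq (W j k) * Real.exp (hA.eigenvalues k) :=
        sum_le_sum fun j _ => convexOn_exp.map_sum_le (fun k _ => Complex.normSq_nonneg _)
          (sum_normSq_row_of_mem_unitaryGroup hW j) (fun _ _ => Set.mem_univ _)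
    _ = ∑ k, Real.exp (hA.eigenvalues k) := by
        rw [sum_comm]
        simp only [← sum_mul, sum_normSq_col_of_mem_unitaryGroup hW, one_mul]
    _ = (NormedSpace.exp A).trace.re := hA.re_trace_exp.symm

theorem convexOn_log_re_trace_exp :
    ConvexOn ℝ {A : Matrix n n ℂ | A.IsHermitian} (fun A => log (NormedSpace.exp A).trace.re) := by
  rcases isEmpty_or_nonempty n with hn | hn
  · simpa [trace] using convexOn_const (0 : ℝ) convex_setOf_isHermitian
  refine ⟨convex_setOf_isHermitian, fun A hA B hB a b ha hb hab => ?_⟩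
  have hK : (a • A + b • B).IsHermitian := convex_setOf_isHermitian hA hB ha hb hab
  set U := (hK.eigenvectorUnitary : Matrix n n ℂ)
  have hU : U ∈ unitaryGroup n ℂ := hK.eigenvectorUnitary.2
  set x : n → ℝ := fun j => ((star U * A * U) j j).re
  set y : n → ℝ := fun j => ((star U * B * U) j j).re
  have heig : hK.eigenvalues = a • x + b • y := by
    ext j
    have hdiag := congrArg (fun M : Matrix n n ℂ => (M j j).re) hK.star_eigenvectorUnitary_mul_mul
    simp only [mul_add, add_mul, mul_smul_comm, smul_mul_assoc, add_apply, smul_apply,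
      diagonal_apply_eq, Complex.ofReal_re, Complex.add_re, Complex.real_smul,
      Complex.re_ofReal_mul] at hdiag
    exact hdiag.symm
  calc log (NormedSpace.exp (a • A + b • B)).trace.re
      = log (∑ j, Real.exp ((a • x + b • y) j)) := by rw [hK.re_trace_exp, heig]
    _ ≤ a * log (∑ j, Real.exp (x j)) + b * log (∑ j, Real.exp (y j)) :=
        convexOn_log_sum_exp.2 (Set.mem_univ x) (Set.mem_univ y) ha hb hab
    _ ≤ a * log (NormedSpace.exp A).trace.re + b * log (NormedSpace.exp B).trace.re := by
        gcongr
        · exact hA.sum_exp_re_diag_le_re_trace_exp hU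
        · exact hB.sum_exp_re_diag_le_re_trace_exp hU

end Matrix

theorem muDotQ_add {d c : ℕ} (Q : Fin c → Matrix (Fin d) (Fin d) ℂ) (μ ν : Fin c → ℝ) :
    muDotQ Q (μ + ν) = muDotQ Q μ + muDotQ Q ν := by
  simp [muDotQ, add_smul, sum_add_distrib]

theorem muDotQ_smul {d c : ℕ} (Q : Fin c → Matrix (Fin d) (Fin d) ℂ) (a : ℝ) (μ : Fin c → ℝ) :
    muDotQ Q (a • μ) = a • muDotQ Q μ := by
  simp [muDotQ, smul_sum, mul_smul, Complex.coe_smul]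

theorem isHermitian_muDotQ {d c : ℕ} {Q : Fin c → Matrix (Fin d) (Fin d) ℂ}
    (hQ : ∀ i, (Q i).IsHermitian) (μ : Fin c → ℝ) : (muDotQ Q μ).IsHermitian :=
  Submodule.sum_mem (selfAdjoint.submodule ℝ _) fun i _ => Submodule.smul_mem _ (μ i) (hQ i)

theorem convexOn_log_partitionZ {d c : ℕ} {H : Matrix (Fin d) (Fin d) ℂ} (hH : H.IsHermitian)
    {Q : Fin c → Matrix (Fin d) (Fin d) ℂ} (hQ : ∀ i, (Q i).IsHermitian) (T : ℝ) :
    ConvexOn ℝ Set.univ (fun μ => log (partitionZ H Q T μ)) := by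
  set K : (Fin c → ℝ) → Matrix (Fin d) (Fin d) ℂ := fun μ => (-(T⁻¹) : ℂ) • (H - muDotQ Q μ)
  have hK (μ : Fin c → ℝ) : (K μ).IsHermitian := by
    have hK_real_smul : K μ = (-(T⁻¹) : ℝ) • (H - muDotQ Q μ) := by simp [K, ← Complex.coe_smul]
    rw [hK_real_smul]
    exact Submodule.smul_mem (selfAdjoint.submodule ℝ _) _ (hH.sub (isHermitian_muDotQ hQ μ))
  have hK_affine {μ ν : Fin c → ℝ} {a b : ℝ} (hab : a + b = 1) :
      K (a • μ + b • ν) = a • K μ + b • K ν := by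
    simp only [K, muDotQ_add, muDotQ_smul]
    linear_combination (norm := module) -(hab • ((-(T⁻¹) : ℂ) • H))
  refine ⟨convex_univ, fun μ _ ν _ a b ha hb hab => ?_⟩
  have hconvex := convexOn_log_re_trace_exp.2 (hK μ) (hK ν) ha hb hab
  rw [← hK_affine hab] at hconvex
  exact hconvex

theorem stmt_11_general (d c : ℕ)
    (H : Matrix (Fin d) (Fin d) ℂ) (hH : H.IsHermitian)
    (Q : Fin c → Matrix (Fin d) (Fin d) ℂ) (hQ : ∀ i, (Q i).IsHermitian)
    (q : Fin c → ℝ) (T : ℝ) (hT : 0 < T) :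
    ConcaveOn ℝ Set.univ
      (fun μ : Fin c → ℝ => ∑ i, μ i * q i - T * Real.log (partitionZ H Q T μ)) :=
  (((dotProductBilin ℝ ℝ).flip q).concaveOn convex_univ).sub
    ((convexOn_log_partitionZ hH hQ T).smul hT.le)

/-- `f(μ) = μ·q − T ln Z_T(μ)` is concave on `ℝ^c`. -/
theorem stmt_11 (d c : ℕ) (hd : 1 ≤ d)
    (H : Matrix (Fin d) (Fin d) ℂ) (hH : H.IsHermitian)
    (Q : Fin c → Matrix (Fin d) (Fin d) ℂ) (hQ : ∀ i, (Q i).IsHermitian)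
    (q : Fin c → ℝ) (T : ℝ) (hT : 0 < T) :
    ConcaveOn ℝ Set.univ
      (fun μ : Fin c → ℝ => ∑ i, μ i * q i - T * Real.log (partitionZ H Q T μ)) :=
  stmt_11_general d c H hH Q hQ q T hT
end
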